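/- arXiv:1305.7009 — 4 statements merged into one kernel-verified Lean document; each statement's English description precedes it below -/
import Mathlib

section
/- Let n₁, n₂, n₃ be unit vectors in ℝ³ and η ∈ (0,1]. Suppose that for each pair (ij) ∈ {(12),(13),(23)} a pairwise joint measurement G^{ij} of the noisy spin-1/2 observables along n_i and n_j with sharpness η is given. Then there exists a qubit density matrix ρ such that R₃(ρ) ≤ 1 − η/3. (No state-independent violation of the LSW inequality is possible with noisy spin-1/2 qubit observables.) -/
open Matrix ComplexOrder

noncomputable section

abbrev Mat2 := Matrix (Fin 2) (Fin 2) ℂ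

/-- Pauli matrix σ₁. -/
def σ1 : Mat2 := !![0, 1; 1, 0]
/-- Pauli matrix σ₂. -/
def σ2 : Mat2 := !![0, -Complex.I; Complex.I, 0]
/-- Pauli matrix σ₃. -/
def σ3 : Mat2 := !![1, 0; 0, -1]

/-- σ·a for a real 3-vector a. -/
def pauli (a : Fin 3 → ℝ) : Mat2 := (a 0 : ℂ) • σ1 + (a 1 : ℂ) • σ2 + (a 2 : ℂ) • σ3

/-- Euclidean inner product on ℝ³. -/
def dot3 (a b : Fin 3 → ℝ) : ℝ := a 0 * b 0 + a 1 * b 1 + a 2 * b 2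

/-- Euclidean norm on ℝ³. -/
def norm3 (a : Fin 3 → ℝ) : ℝ := Real.sqrt (dot3 a a)

/-- A qubit effect: both `E` and `I - E` positive semidefinite. -/
def IsEffect (E : Mat2) : Prop := E.PosSemidef ∧ (1 - E).PosSemidef

/-- A qubit density matrix. -/
def IsDensity (ρ : Mat2) : Prop := ρ.PosSemidef ∧ ρ.trace = 1

/-- E₊ = (1/2)(I + η σ·n). -/
def Epos (η : ℝ) (n : Fin 3 → ℝ) : Mat2 := (1/2 : ℂ) • (1 + (η : ℂ) • pauli n)
/-- E₋ = (1/2)(I - η σ·n). -/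
def Eneg (η : ℝ) (n : Fin 3 → ℝ) : Mat2 := (1/2 : ℂ) • (1 - (η : ℂ) • pauli n)

/-- A pairwise joint measurement of the noisy spin-1/2 observables along nᵢ and nⱼ. -/
def IsJointMmt (η : ℝ) (ni nj : Fin 3 → ℝ) (Gpp Gpm Gmp Gmm : Mat2) : Prop :=
  IsEffect Gpp ∧ IsEffect Gpm ∧ IsEffect Gmp ∧ IsEffect Gmm ∧
  Gpp + Gpm = Epos η ni ∧ Gmp + Gmm = Eneg η ni ∧
  Gpp + Gmp = Epos η nj ∧ Gpm + Gmm = Eneg η nj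

/-- Average anticorrelation probability R₃(ρ), given the anticorrelation effects of the
three pairwise joint measurements. -/
def R3 (ρ G12pm G12mp G13pm G13mp G23pm G23mp : Mat2) : ℝ :=
  (1/3) * ((ρ * (G12pm + G12mp)).trace.re + (ρ * (G13pm + G13mp)).trace.re +
    (ρ * (G23pm + G23mp)).trace.re)

/-- Parametric joint-measurement family. -/
def Gpp (η : ℝ) (ni nj : Fin 3 → ℝ) (α : ℝ) (a : Fin 3 → ℝ) : Mat2 :=
  (1/2 : ℂ) • (((α/2 : ℝ) : ℂ) • (1 : Mat2) + pauli ((1/2 : ℝ) • (η • (ni + nj) - a)))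
def Gpm (η : ℝ) (ni nj : Fin 3 → ℝ) (α : ℝ) (a : Fin 3 → ℝ) : Mat2 :=
  (1/2 : ℂ) • (((1 - α/2 : ℝ) : ℂ) • (1 : Mat2) + pauli ((1/2 : ℝ) • (η • (ni - nj) + a)))
def Gmp (η : ℝ) (ni nj : Fin 3 → ℝ) (α : ℝ) (a : Fin 3 → ℝ) : Mat2 :=
  (1/2 : ℂ) • (((1 - α/2 : ℝ) : ℂ) • (1 : Mat2) + pauli ((1/2 : ℝ) • (-(η • ni) + η • nj + a)))
def Gmm (η : ℝ) (ni nj : Fin 3 → ℝ) (α : ℝ) (a : Fin 3 → ℝ) : Mat2 :=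
  (1/2 : ℂ) • (((α/2 : ℝ) : ℂ) • (1 : Mat2) + pauli ((1/2 : ℝ) • (-(η • (ni + nj)) - a)))

/-- Trine directions in the ZX plane. -/
def tn1 : Fin 3 → ℝ := ![0, 0, 1]
def tn2 : Fin 3 → ℝ := ![Real.sqrt 3 / 2, 0, -(1/2)]
def tn3 : Fin 3 → ℝ := ![-(Real.sqrt 3 / 2), 0, -(1/2)]

/-- sign of a Boolean, as ±1. -/
def sgn (b : Bool) : ℝ := if b then 1 else -1

/-- m_X = Σₖ Xₖ nₖ. -/
def mvec {N : ℕ} (n : Fin N → Fin 3 → ℝ) (X : Fin N → Bool) : Fin 3 → ℝ :=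
  ∑ k, sgn (X k) • n k

/-- Joint measurability of the N noisy qubit observables. -/
def JointlyMeasurable {N : ℕ} (η : ℝ) (n : Fin N → Fin 3 → ℝ) : Prop :=
  ∃ E : (Fin N → Bool) → Mat2,
    (∀ X, IsEffect (E X)) ∧ (∑ X, E X) = 1 ∧
    (∀ k, ∑ X ∈ Finset.univ.filter (fun X => X k = true), E X = Epos η (n k)) ∧
    (∀ k, ∑ X ∈ Finset.univ.filter (fun X => X k = false), E X = Eneg η (n k))


/-! The pure state `ρ = (I + σ·n₂)/2` works. For any joint measurement `G` of the pair `(i, j)`,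
`G₊₊ - G₋₋ = (η/2) σ·(nᵢ + nⱼ)`, so positivity of `G₊₊` and `G₋₋` bounds the correlation
probability `Tr ρ(G₊₊ + G₋₋)` below by `(η/2)|n₂·nᵢ + n₂·nⱼ|`. With `n₂·n₂ = 1` the three
absolute values add up to at least `2`, so the anticorrelation probabilities add up to at most
`3 - η`. -/

open scoped MatrixOrder Matrix.Norms.L2Operator in
theorem Matrix.PosSemidef.trace_mul_nonneg {n 𝕜 : Type*} [Fintype n] [RCLike 𝕜]
    {A B : Matrix n n 𝕜} (hA : A.PosSemidef) (hB : B.PosSemidef) : 0 ≤ (A * B).trace := by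
  classical
  obtain ⟨C, rfl⟩ := CStarAlgebra.nonneg_iff_eq_star_mul_self.mp hB.nonneg
  rw [star_eq_conjTranspose, ← Matrix.mul_assoc, trace_mul_cycle]
  exact (hA.mul_mul_conjTranspose_same C).trace_nonneg

theorem abs_re_trace_mul_sub_le {n : Type*} [Fintype n] {ρ P S : Matrix n n ℂ}
    (hρ : ρ.PosSemidef) (hP : P.PosSemidef) (hS : S.PosSemidef) :
    |(ρ * (P - S)).trace.re| ≤ (ρ * (P + S)).trace.re := by
  have hρP : 0 ≤ (ρ * P).trace.re := (Complex.nonneg_iff.mp (hρ.trace_mul_nonneg hP)).1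
  have hρS : 0 ≤ (ρ * S).trace.re := (Complex.nonneg_iff.mp (hρ.trace_mul_nonneg hS)).1
  rw [Matrix.mul_sub, Matrix.mul_add, trace_sub, trace_add, Complex.sub_re, Complex.add_re]
  exact abs_le.mpr ⟨by linarith, by linarith⟩

theorem pauli_eq (a : Fin 3 → ℝ) :
    pauli a = !![(a 2 : ℂ), (a 0 : ℂ) - (a 1 : ℂ) * Complex.I;
                 (a 0 : ℂ) + (a 1 : ℂ) * Complex.I, -(a 2 : ℂ)] := by
  ext i j; fin_cases i <;> fin_cases j <;> (simp [pauli, σ1, σ2, σ3]; try ring)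

theorem trace_pauli (a : Fin 3 → ℝ) : (pauli a).trace = 0 := by
  simp [pauli_eq, trace_fin_two]

theorem conjTranspose_pauli (a : Fin 3 → ℝ) : (pauli a)ᴴ = pauli a := by
  ext i j; fin_cases i <;> fin_cases j <;> simp [pauli_eq, Complex.ext_iff]

theorem pauli_mul_self (a : Fin 3 → ℝ) : pauli a * pauli a = (dot3 a a : ℂ) • 1 := by
  ext i j
  fin_cases i <;> fin_cases j <;> simp [pauli_eq, mul_apply, dot3] <;> ring_nf <;>
    simp [Complex.I_sq]

theorem trace_pauli_mul_pauli (a b : Fin 3 → ℝ) :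
    (pauli a * pauli b).trace = 2 * (dot3 a b : ℂ) := by
  simp [pauli_eq, trace_fin_two, dot3]
  ring_nf
  simp [Complex.I_sq]

def blochState (v : Fin 3 → ℝ) : Mat2 := (1/2 : ℂ) • (1 + pauli v)

theorem trace_blochState (v : Fin 3 → ℝ) : (blochState v).trace = 1 := by
  simp [blochState, trace_add, trace_pauli]

theorem trace_blochState_mul_pauli (v m : Fin 3 → ℝ) :
    (blochState v * pauli m).trace = dot3 v m := by
  rw [blochState, smul_mul_assoc, add_mul, one_mul, trace_smul, trace_add, trace_pauli,
    trace_pauli_mul_pauli, smul_eq_mul]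
  ring

theorem conjTranspose_blochState (v : Fin 3 → ℝ) : (blochState v)ᴴ = blochState v := by
  simp [blochState, conjTranspose_pauli]

theorem blochState_mul_self {v : Fin 3 → ℝ} (hv : dot3 v v = 1) :
    blochState v * blochState v = blochState v := by
  simp only [blochState, smul_mul_smul_comm, add_mul, mul_add, one_mul, mul_one,
    pauli_mul_self, hv, Complex.ofReal_one, one_smul]
  module

theorem isDensity_blochState {v : Fin 3 → ℝ} (hv : norm3 v = 1) : IsDensity (blochState v) := by
  refine ⟨?_, trace_blochState v⟩
  rw [← blochState_mul_self (Real.sqrt_eq_one.mp hv)]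
  nth_rw 1 [← conjTranspose_blochState]
  exact posSemidef_conjTranspose_mul_self _

namespace IsJointMmt

variable {η : ℝ} {ni nj : Fin 3 → ℝ} {P Q R S : Mat2}

theorem sub_eq (h : IsJointMmt η ni nj P Q R S) :
    P - S = ((η : ℂ) / 2) • (pauli ni + pauli nj) := by
  obtain ⟨-, -, -, -, hPQ, -, -, hQS⟩ := h
  rw [show P - S = (P + Q) - (Q + S) by abel, hPQ, hQS, Epos, Eneg]
  module

theorem add_add_add_eq_one (h : IsJointMmt η ni nj P Q R S) : P + Q + R + S = 1 := by
  obtain ⟨-, -, -, -, hPQ, hRS, -, -⟩ := h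
  rw [add_assoc, hPQ, hRS, Epos, Eneg]
  module

theorem abs_mul_add_le_re_trace {v : Fin 3 → ℝ} (hv : norm3 v = 1)
    (h : IsJointMmt η ni nj P Q R S) :
    |η / 2 * (dot3 v ni + dot3 v nj)| ≤ (blochState v * (P + S)).trace.re := by
  have htr : (blochState v * (P - S)).trace = ((η / 2 * (dot3 v ni + dot3 v nj) : ℝ) : ℂ) := by
    rw [h.sub_eq, Matrix.mul_smul, trace_smul, Matrix.mul_add, trace_add,
      trace_blochState_mul_pauli, trace_blochState_mul_pauli, smul_eq_mul]
    push_cast; ring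
  simpa only [htr, Complex.ofReal_re] using
    abs_re_trace_mul_sub_le (isDensity_blochState hv).1 h.1.1 h.2.2.2.1.1

theorem re_trace_anticorrelation_le {v : Fin 3 → ℝ} (hv : norm3 v = 1)
    (h : IsJointMmt η ni nj P Q R S) :
    (blochState v * (Q + R)).trace.re ≤ 1 - |η / 2 * (dot3 v ni + dot3 v nj)| := by
  have hQR : Q + R = 1 - (P + S) := by
    rw [← h.add_add_add_eq_one]; abel
  rw [hQR, mul_sub, mul_one, trace_sub, trace_blochState, Complex.sub_re, Complex.one_re]
  linarith [h.abs_mul_add_le_re_trace hv]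

end IsJointMmt

theorem no_state_independent_violation_general
    (n₁ n₂ n₃ : Fin 3 → ℝ) (h2 : norm3 n₂ = 1)
    (η : ℝ)
    (G12pp G12pm G12mp G12mm G13pp G13pm G13mp G13mm G23pp G23pm G23mp G23mm : Mat2)
    (h12 : IsJointMmt η n₁ n₂ G12pp G12pm G12mp G12mm)
    (h13 : IsJointMmt η n₁ n₃ G13pp G13pm G13mp G13mm)
    (h23 : IsJointMmt η n₂ n₃ G23pp G23pm G23mp G23mm) :
    ∃ ρ : Mat2, IsDensity ρ ∧
      R3 ρ G12pm G12mp G13pm G13mp G23pm G23mp ≤ 1 - η / 3 := by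
  refine ⟨blochState n₂, isDensity_blochState h2, ?_⟩
  have h22 : dot3 n₂ n₂ = 1 := Real.sqrt_eq_one.mp h2
  have b12 := h12.re_trace_anticorrelation_le h2
  have b13 := h13.re_trace_anticorrelation_le h2
  have b23 := h23.re_trace_anticorrelation_le h2
  rw [h22] at b12 b23
  have c12 := le_abs_self (η / 2 * (dot3 n₂ n₁ + 1))
  have c13 := neg_abs_le (η / 2 * (dot3 n₂ n₁ + dot3 n₂ n₃))
  have c23 := le_abs_self (η / 2 * (1 + dot3 n₂ n₃))
  rw [R3]
  linarith

/-- No state-independent violation of the LSW inequality with noisy spin-1/2 qubit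
observables: for any triple of unit vectors, any sharpness η ∈ (0,1], and any pairwise
joint measurements for the three pairs, some qubit state satisfies R₃(ρ) ≤ 1 - η/3. -/
theorem no_state_independent_violation
    (n₁ n₂ n₃ : Fin 3 → ℝ) (h1 : norm3 n₁ = 1) (h2 : norm3 n₂ = 1) (h3 : norm3 n₃ = 1)
    (η : ℝ) (hη : η ∈ Set.Ioc (0 : ℝ) 1)
    (G12pp G12pm G12mp G12mm G13pp G13pm G13mp G13mm G23pp G23pm G23mp G23mm : Mat2)
    (h12 : IsJointMmt η n₁ n₂ G12pp G12pm G12mp G12mm)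
    (h13 : IsJointMmt η n₁ n₃ G13pp G13pm G13mp G13mm)
    (h23 : IsJointMmt η n₂ n₃ G23pp G23pm G23mp G23mm) :
    ∃ ρ : Mat2, IsDensity ρ ∧
      R3 ρ G12pm G12mp G13pm G13mp G23pm G23mp ≤ 1 - η / 3 :=
  no_state_independent_violation_general n₁ n₂ n₃ h2 η G12pp G12pm G12mp G12mm G13pp G13pm G13mp
    G13mm G23pp G23pm G23mp G23mm h12 h13 h23

end
end

section
/- Fix η ∈ (2/3, √3−1] and the trine directions n₁, n₂, n₃ in the ZX plane. For each pair (ij) ∈ {(12),(13),(23)}, the four matrices of the parametric joint-measurement family with α = α(η) = 1 − η²/2 and a = a(η) = (0, √(1 + η⁴/4 − 2η²), 0) are qubit effects, they sum to the identity, and they satisfy the marginal conditions, i.e., they form a pairwise joint measurement of the noisy spin-1/2 observables along n_i and n_j with sharpness η. -/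
open Matrix ComplexOrder

noncomputable section

/-- a(η) = (0, √(1 + η⁴/4 - 2η²), 0). -/
def aopt (η : ℝ) : Fin 3 → ℝ := ![0, Real.sqrt (1 + η^4/4 - 2*η^2), 0]

/-- α(η) = 1 - η²/2. -/
def αopt (η : ℝ) : ℝ := 1 - η^2/2

/-- The four matrices of the parametric family with parameters α(η), a(η) form a valid
pairwise joint measurement (qubit effects, correct marginals) and sum to the identity. -/
def GoodJoint (η : ℝ) (ni nj : Fin 3 → ℝ) : Prop :=
  IsJointMmt η ni nj
    (Gpp η ni nj (αopt η) (aopt η)) (Gpm η ni nj (αopt η) (aopt η))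
    (Gmp η ni nj (αopt η) (aopt η)) (Gmm η ni nj (αopt η) (aopt η)) ∧
  Gpp η ni nj (αopt η) (aopt η) + Gpm η ni nj (αopt η) (aopt η) +
    Gmp η ni nj (αopt η) (aopt η) + Gmm η ni nj (αopt η) (aopt η) = 1

/-!
An operator `(1/2)(c I + σ·v)` is positive semidefinite exactly when `|v| ≤ c`, so it is an effect
when `|v| ≤ c` and `|v| ≤ 2 - c`. The marginal conditions are linear identities, true for every
`α` and `a`. For a pair of unit vectors with `nᵢ·nⱼ = -1/2` and `a` orthogonal to both, the Bloch
vectors of the four operators have squared lengths `(η² + |a|²)/4` and `(3η² + |a|²)/4`; with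
`|a|² = 1 + η⁴/4 - 2η²` these are `(α/2)²` and `(1 - α/2)²` for `α = 1 - η²/2`, so all four
effects lie on the boundary of the allowed region. The bound `η ≤ √3 - 1` is what makes `|a|² ≥ 0`.
-/

theorem posSemidef_fin_two_of_normSq_le {a d : ℝ} {b : ℂ} (ha : 0 ≤ a) (hd : 0 ≤ d)
    (h : Complex.normSq b ≤ a * d) : !![(a : ℂ), b; star b, (d : ℂ)].PosSemidef := by
  refine posSemidef_iff_dotProduct_mulVec.2 ⟨?_, fun x => ?_⟩
  · ext i j
    fin_cases i <;> fin_cases j <;> simp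
  · have hform : star x ⬝ᵥ (!![(a : ℂ), b; star b, (d : ℂ)] *ᵥ x) = ((a * Complex.normSq (x 0) +
        d * Complex.normSq (x 1) + 2 * (b * star (x 0) * x 1).re : ℝ) : ℂ) := by
      simp [dotProduct, mulVec, Fin.sum_univ_two, Complex.ext_iff, Complex.normSq_apply]
      constructor <;> ring
    have hcross : (b * star (x 0) * x 1).re * (b * star (x 0) * x 1).re ≤
        a * Complex.normSq (x 0) * (d * Complex.normSq (x 1)) :=
      calc _ ≤ Complex.normSq (b * star (x 0) * x 1) := Complex.re_sq_le_normSq _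
        _ = Complex.normSq b * (Complex.normSq (x 0) * Complex.normSq (x 1)) := by
          simp only [Complex.normSq_mul, Complex.star_def, Complex.normSq_conj]; ring
        _ ≤ a * d * (Complex.normSq (x 0) * Complex.normSq (x 1)) :=
          mul_le_mul_of_nonneg_right h
            (mul_nonneg (Complex.normSq_nonneg _) (Complex.normSq_nonneg _))
        _ = _ := by ring
    rw [hform, Complex.zero_le_real]
    have hp := mul_nonneg ha (Complex.normSq_nonneg (x 0))
    have hq := mul_nonneg hd (Complex.normSq_nonneg (x 1))
    nlinarith [sq_nonneg (a * Complex.normSq (x 0) - d * Complex.normSq (x 1))]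

theorem smul_one_add_pauli_eq (c : ℝ) (v : Fin 3 → ℝ) :
    (c : ℂ) • (1 : Mat2) + pauli v =
      !![((c + v 2 : ℝ) : ℂ), ⟨v 0, -v 1⟩; star ⟨v 0, -v 1⟩, ((c - v 2 : ℝ) : ℂ)] := by
  ext i j
  fin_cases i <;> fin_cases j <;> simp [pauli, σ1, σ2, σ3, Complex.ext_iff, sub_eq_add_neg]

theorem posSemidef_smul_one_add_pauli {c : ℝ} {v : Fin 3 → ℝ} (h : norm3 v ≤ c) :
    ((c : ℂ) • (1 : Mat2) + pauli v).PosSemidef := by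
  obtain ⟨hc, hv⟩ := Real.sqrt_le_iff.1 h
  simp only [dot3] at hv
  rw [smul_one_add_pauli_eq]
  refine posSemidef_fin_two_of_normSq_le ?_ ?_ ?_
  · nlinarith [sq_nonneg (v 0), sq_nonneg (v 1)]
  · nlinarith [sq_nonneg (v 0), sq_nonneg (v 1)]
  · simp only [Complex.normSq_mk]
    nlinarith

theorem pauli_neg (v : Fin 3 → ℝ) : pauli (-v) = -pauli v := by
  simp only [pauli, Pi.neg_apply, Complex.ofReal_neg]
  module

theorem pauli_add (u v : Fin 3 → ℝ) : pauli (u + v) = pauli u + pauli v := by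
  simp only [pauli, Pi.add_apply, Complex.ofReal_add]
  module

theorem pauli_smul (r : ℝ) (v : Fin 3 → ℝ) : pauli (r • v) = (r : ℂ) • pauli v := by
  simp only [pauli, Pi.smul_apply, smul_eq_mul, Complex.ofReal_mul]
  module

theorem pauli_sub (u v : Fin 3 → ℝ) : pauli (u - v) = pauli u - pauli v := by
  rw [sub_eq_add_neg, pauli_add, pauli_neg, sub_eq_add_neg]

theorem norm3_neg (v : Fin 3 → ℝ) : norm3 (-v) = norm3 v := by
  simp [norm3, dot3]

theorem isEffect_half_smul_smul_one_add_pauli {c : ℝ} {v : Fin 3 → ℝ} (h₁ : norm3 v ≤ c)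
    (h₂ : norm3 v ≤ 2 - c) : IsEffect ((1 / 2 : ℂ) • ((c : ℂ) • (1 : Mat2) + pauli v)) := by
  have hsub : 1 - (1 / 2 : ℂ) • ((c : ℂ) • (1 : Mat2) + pauli v) =
      (1 / 2 : ℂ) • (((2 - c : ℝ) : ℂ) • (1 : Mat2) + pauli (-v)) := by
    rw [pauli_neg]; push_cast; module
  refine ⟨(posSemidef_smul_one_add_pauli h₁).smul one_half_pos.le, ?_⟩
  rw [hsub]
  exact (posSemidef_smul_one_add_pauli (by rwa [norm3_neg])).smul one_half_pos.le

section Marginals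

variable (η α : ℝ) (ni nj a : Fin 3 → ℝ)

theorem Gpp_add_Gpm : Gpp η ni nj α a + Gpm η ni nj α a = Epos η ni := by
  simp only [Gpp, Gpm, Epos, pauli_add, pauli_sub, pauli_smul]
  push_cast
  module

theorem Gmp_add_Gmm : Gmp η ni nj α a + Gmm η ni nj α a = Eneg η ni := by
  simp only [Gmp, Gmm, Eneg, pauli_add, pauli_sub, pauli_neg, pauli_smul]
  push_cast
  module

theorem Gpp_add_Gmp : Gpp η ni nj α a + Gmp η ni nj α a = Epos η nj := by
  simp only [Gpp, Gmp, Epos, pauli_add, pauli_sub, pauli_neg, pauli_smul]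
  push_cast
  module

theorem Gpm_add_Gmm : Gpm η ni nj α a + Gmm η ni nj α a = Eneg η nj := by
  simp only [Gpm, Gmm, Eneg, pauli_add, pauli_sub, pauli_neg, pauli_smul]
  push_cast
  module

theorem Gpp_add_Gpm_add_Gmp_add_Gmm :
    Gpp η ni nj α a + Gpm η ni nj α a + Gmp η ni nj α a + Gmm η ni nj α a = 1 := by
  rw [add_assoc _ (Gmp η ni nj α a), Gpp_add_Gpm, Gmp_add_Gmm, Epos, Eneg]
  module

end Marginals

theorem dot3_eq_dotProduct (u v : Fin 3 → ℝ) : dot3 u v = u ⬝ᵥ v := by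
  simp [dot3, dotProduct, Fin.sum_univ_three]

theorem norm3_eq_of_dot3_self_eq {v : Fin 3 → ℝ} {c : ℝ} (hc : 0 ≤ c) (h : dot3 v v = c ^ 2) :
    norm3 v = c := by
  rw [norm3, h, Real.sqrt_sq hc]

theorem isJointMmt_of_dot3_eq_neg_half {η : ℝ} {ni nj a : Fin 3 → ℝ}
    (hi : dot3 ni ni = 1) (hj : dot3 nj nj = 1) (hij : dot3 ni nj = -(1 / 2))
    (hai : dot3 ni a = 0) (haj : dot3 nj a = 0) (ha : dot3 a a = 1 + η ^ 4 / 4 - 2 * η ^ 2)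
    (hη : η ^ 2 ≤ 2) :
    IsJointMmt η ni nj (Gpp η ni nj (αopt η) a) (Gpm η ni nj (αopt η) a)
      (Gmp η ni nj (αopt η) a) (Gmm η ni nj (αopt η) a) := by
  simp only [dot3_eq_dotProduct] at hi hj hij hai haj ha
  have hα : 0 ≤ αopt η / 2 ∧ αopt η / 2 ≤ 1 := by constructor <;> simp only [αopt] <;> nlinarith
  obtain ⟨hpp, hpm, hmp, hmm⟩ :
      norm3 ((1 / 2 : ℝ) • (η • (ni + nj) - a)) = αopt η / 2 ∧
      norm3 ((1 / 2 : ℝ) • (η • (ni - nj) + a)) = 1 - αopt η / 2 ∧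
      norm3 ((1 / 2 : ℝ) • (-(η • ni) + η • nj + a)) = 1 - αopt η / 2 ∧
      norm3 ((1 / 2 : ℝ) • (-(η • (ni + nj)) - a)) = αopt η / 2 := by
    refine ⟨norm3_eq_of_dot3_self_eq hα.1 ?_, norm3_eq_of_dot3_self_eq (by linarith) ?_,
      norm3_eq_of_dot3_self_eq (by linarith) ?_, norm3_eq_of_dot3_self_eq hα.1 ?_⟩ <;>
    simp only [dot3_eq_dotProduct, smul_dotProduct, dotProduct_smul, add_dotProduct,
      dotProduct_add, sub_dotProduct, dotProduct_sub, neg_dotProduct, dotProduct_neg, smul_eq_mul,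
      dotProduct_comm a ni, dotProduct_comm a nj, dotProduct_comm nj ni, hi, hj, hij, hai, haj, ha,
      αopt] <;>
    ring
  refine ⟨isEffect_half_smul_smul_one_add_pauli ?_ ?_, isEffect_half_smul_smul_one_add_pauli ?_ ?_,
    isEffect_half_smul_smul_one_add_pauli ?_ ?_, isEffect_half_smul_smul_one_add_pauli ?_ ?_,
    Gpp_add_Gpm .., Gmp_add_Gmm .., Gpp_add_Gmp .., Gpm_add_Gmm ..⟩ <;>
  linarith

theorem one_add_pow_four_div_four_sub_nonneg {η : ℝ} (hη : η ^ 2 ≤ (√3 - 1) ^ 2) :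
    0 ≤ 1 + η ^ 4 / 4 - 2 * η ^ 2 := by
  have h3 : √3 ^ 2 = 3 := Real.sq_sqrt (by norm_num)
  have h3' : 1 ≤ √3 := by nlinarith [Real.sqrt_nonneg 3]
  -- as a polynomial in `η²`, the radicand is `(η² - (√3 - 1)²)(η² - (√3 + 1)²) / 4`
  nlinarith [mul_nonneg (sub_nonneg.2 hη) (by nlinarith : (0 : ℝ) ≤ (√3 + 1) ^ 2 - η ^ 2)]

theorem dot3_aopt_self {η : ℝ} (h : 0 ≤ 1 + η ^ 4 / 4 - 2 * η ^ 2) :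
    dot3 (aopt η) (aopt η) = 1 + η ^ 4 / 4 - 2 * η ^ 2 := by
  simp [dot3, aopt, Real.mul_self_sqrt h]

theorem dot3_aopt_of_apply_one_eq_zero {n : Fin 3 → ℝ} (η : ℝ) (hn : n 1 = 0) :
    dot3 n (aopt η) = 0 := by
  simp [dot3, aopt, hn]

theorem goodJoint_of_dot3_eq_neg_half {η : ℝ} {ni nj : Fin 3 → ℝ} (hη : η ^ 2 ≤ (√3 - 1) ^ 2)
    (hi : dot3 ni ni = 1) (hj : dot3 nj nj = 1) (hij : dot3 ni nj = -(1 / 2))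
    (hi1 : ni 1 = 0) (hj1 : nj 1 = 0) : GoodJoint η ni nj := by
  have hη2 : η ^ 2 ≤ 2 := by
    have h3 : √3 ^ 2 = 3 := Real.sq_sqrt (by norm_num)
    nlinarith [Real.sqrt_nonneg 3]
  refine ⟨isJointMmt_of_dot3_eq_neg_half hi hj hij (dot3_aopt_of_apply_one_eq_zero η hi1)
    (dot3_aopt_of_apply_one_eq_zero η hj1)
    (dot3_aopt_self (one_add_pow_four_div_four_sub_nonneg hη)) hη2,
    Gpp_add_Gpm_add_Gmp_add_Gmm ..⟩

/-- For trine axes in the ZX plane and any η ∈ (2/3, √3 - 1], the parametric family with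
α(η) = 1 - η²/2 and a(η) = (0, √(1 + η⁴/4 - 2η²), 0) gives, for each of the three pairs,
a valid pairwise joint measurement of the corresponding noisy spin-1/2 observables. -/
theorem parametric_family_is_joint_measurement
    (η : ℝ) (hη : η ∈ Set.Ioc (2/3 : ℝ) (Real.sqrt 3 - 1)) :
    GoodJoint η tn1 tn2 ∧ GoodJoint η tn1 tn3 ∧ GoodJoint η tn2 tn3 := by
  have hη2 : η ^ 2 ≤ (√3 - 1) ^ 2 := pow_le_pow_left₀ (by linarith [hη.1]) hη.2 2
  have h3 : √3 ^ 2 = 3 := Real.sq_sqrt (by norm_num)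
  have h11 : dot3 tn1 tn1 = 1 := by simp [dot3, tn1]
  have h22 : dot3 tn2 tn2 = 1 := by
    simp only [dot3, tn2, cons_val_zero, cons_val_one, cons_val]; linear_combination h3 / 4
  have h33 : dot3 tn3 tn3 = 1 := by
    simp only [dot3, tn3, cons_val_zero, cons_val_one, cons_val]; linear_combination h3 / 4
  have h12 : dot3 tn1 tn2 = -(1 / 2) := by simp [dot3, tn1, tn2]
  have h13 : dot3 tn1 tn3 = -(1 / 2) := by simp [dot3, tn1, tn3]
  have h23 : dot3 tn2 tn3 = -(1 / 2) := by
    simp only [dot3, tn2, tn3, cons_val_zero, cons_val_one, cons_val]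
    linear_combination -h3 / 4
  exact ⟨goodJoint_of_dot3_eq_neg_half hη2 h11 h22 h12 rfl rfl,
    goodJoint_of_dot3_eq_neg_half hη2 h11 h33 h13 rfl rfl,
    goodJoint_of_dot3_eq_neg_half hη2 h22 h33 h23 rfl rfl⟩

end
end

section
/- For all η ∈ [0,1] and c ∈ [−1,1]: 1 + η⁴c² − 2η² ≥ 0 if and only if η ≤ 1/√(1 + √(1 − c²)). (With c = cos θ this says the pairwise joint-measurability condition 1 + η⁴ cos²θ − 2η² ≥ 0 is equivalent to η ≤ 1/√(1 + |sin θ|).) -/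
/-!
In `x = η²` the condition is the quadratic `1 - 2x + c²x² = (1 - (1 - s)x)(1 - (1 + s)x)`
with `s = √(1 - c²)`. For `x ∈ [0, 1]` the first factor is positive except in the degenerate
case `s = 0, x = 1`, where both factors vanish, so the sign is that of `1 - (1 + s)x`.
-/

lemma one_sub_two_mul_add_sq_mul_sq_nonneg_iff {x c : ℝ} (hx₀ : 0 ≤ x) (hx₁ : x ≤ 1)
    (hc : c ^ 2 ≤ 1) :
    0 ≤ 1 - 2 * x + c ^ 2 * x ^ 2 ↔ (1 + √(1 - c ^ 2)) * x ≤ 1 := by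
  set s := √(1 - c ^ 2)
  have hs₀ : 0 ≤ s := Real.sqrt_nonneg _
  have hs₂ : s ^ 2 = 1 - c ^ 2 := Real.sq_sqrt (by linarith)
  have hfactor : 1 - 2 * x + c ^ 2 * x ^ 2 = (1 - (1 - s) * x) * (1 - (1 + s) * x) := by
    linear_combination x ^ 2 * hs₂
  rw [hfactor]
  constructor
  · intro h
    by_contra! hroot
    have hfirst : 1 - (1 - s) * x ≤ 0 := nonpos_of_mul_nonneg_left h (by linarith)
    nlinarith [mul_nonneg hs₀ hx₀]
  · intro h
    exact mul_nonneg (by nlinarith [mul_nonneg hs₀ hx₀]) (by linarith)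

lemma le_one_div_sqrt_iff {η a : ℝ} (hη : 0 ≤ η) (ha : 0 < a) :
    η ≤ 1 / √a ↔ a * η ^ 2 ≤ 1 := by
  rw [one_div, ← Real.sqrt_inv, Real.le_sqrt hη (inv_nonneg.2 ha.le), ← one_div, le_div_iff₀' ha]

/-- The pairwise joint-measurability condition 1 + η⁴c² - 2η² ≥ 0 (c = cos θ) is
equivalent to η ≤ 1/√(1 + √(1 - c²)) = 1/√(1 + |sin θ|). -/
theorem pairwise_jm_condition_equiv (η c : ℝ)
    (hη : η ∈ Set.Icc (0 : ℝ) 1) (hc : c ∈ Set.Icc (-1 : ℝ) 1) :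
    0 ≤ 1 + η^4 * c^2 - 2*η^2 ↔ η ≤ 1 / Real.sqrt (1 + Real.sqrt (1 - c^2)) := by
  obtain ⟨hη₀, hη₁⟩ := hη
  have hc₂ : c ^ 2 ≤ 1 := (sq_le_one_iff_abs_le_one c).mpr (abs_le.mpr hc)
  rw [le_one_div_sqrt_iff hη₀ (by positivity), ← one_sub_two_mul_add_sq_mul_sq_nonneg_iff
    (sq_nonneg η) (pow_le_one₀ hη₀ hη₁) hc₂]
  ring_nf
end

section
/- For all real numbers a and b with 0 < a < π/2 and 0 < b < π/2, one has cos a + cos b + |cos(a + b)| > 1. -/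
/-!
Since `|cos (a + b)| ≥ -cos (a + b)`, it suffices that
`cos a + cos b - cos (a + b) = 1 - (1 - cos a) (1 - cos b) + sin a sin b` exceeds `1`.
On `(0, π/2)` we have `0 ≤ 1 - cos x < sin x` (equivalently `tan (x/2) < 1`), so the product
`(1 - cos a) (1 - cos b)` is strictly smaller than `sin a sin b`.
-/

open Real

lemma Real.one_sub_cos_lt_sin {x : ℝ} (hx0 : 0 < x) (hx : x < π / 2) : 1 - cos x < sin x := by
  have hsin : 0 < sin x := sin_pos_of_pos_of_lt_pi hx0 (by linarith [pi_pos])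
  have hcos : 0 < cos x := cos_pos_of_mem_Ioo ⟨by linarith [pi_pos], hx⟩
  nlinarith [sin_sq_add_cos_sq x]

lemma Real.cos_add_cos_sub_cos_add (a b : ℝ) :
    cos a + cos b - cos (a + b) = 1 - (1 - cos a) * (1 - cos b) + sin a * sin b := by
  rw [cos_add]
  ring

/-- For 0 < a < π/2 and 0 < b < π/2 one has cos a + cos b + |cos(a+b)| > 1. -/
theorem cos_sum_gt_one (a b : ℝ) (ha0 : 0 < a) (ha : a < Real.pi / 2)
    (hb0 : 0 < b) (hb : b < Real.pi / 2) :
    1 < Real.cos a + Real.cos b + |Real.cos (a + b)| := by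
  have hprod : (1 - cos a) * (1 - cos b) < sin a * sin b :=
    mul_lt_mul'' (one_sub_cos_lt_sin ha0 ha) (one_sub_cos_lt_sin hb0 hb)
      (sub_nonneg.2 (cos_le_one a)) (sub_nonneg.2 (cos_le_one b))
  calc 1 < 1 - (1 - cos a) * (1 - cos b) + sin a * sin b := by linarith
    _ = cos a + cos b - cos (a + b) := (cos_add_cos_sub_cos_add a b).symm
    _ ≤ cos a + cos b + |cos (a + b)| := by linarith [neg_abs_le (cos (a + b))]
end
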